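/- Let M be a metric space, μ a compactly supported probability measure with supp μ ⊆ B(a, R). If α = (a₁,…,aₙ) ∈ M^n has some coordinate aᵢ with d(a, aᵢ) > 2R, then the n-tuple α' obtained from α by replacing aᵢ with a satisfies F_{n,p}(α') ≤ F_{n,p}(α). -/

import Mathlib

/-! Every point `x` of `B(a, R)` is closer to `a` than to `aᵢ`, since
`d(x, aᵢ) ≥ d(a, aᵢ) - d(x, a) > 2R - R > d(x, a)`. Hence replacing `aᵢ` by `a` lowers the
integrand `min_j d(x, aⱼ)^p` pointwise on the support of `μ`. -/

open MeasureTheory Metric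

/-- The distortion function of order `p`:
`F_{n,p}(a₁, …, aₙ) = ∫ min_{1 ≤ i ≤ n} d(x, aᵢ)^p dμ(x)`. -/
noncomputable def distortionFn {M : Type*} [MetricSpace M] [MeasurableSpace M]
    (μ : Measure M) (p : ℝ) (n : ℕ) (α : Fin n → M) : ℝ :=
  ∫ x, (⨅ i, dist x (α i)) ^ p ∂μ

theorem dist_lt_dist_of_mem_ball_of_two_mul_lt {M : Type*} [PseudoMetricSpace M] {a b x : M}
    {R : ℝ} (hx : x ∈ ball a R) (hb : 2 * R < dist a b) : dist x a < dist x b := by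
  have hxa : dist x a < R := mem_ball.mp hx
  have := dist_triangle_left a b x
  linarith

section iInfDist

variable {ι M : Type*} [PseudoMetricSpace M]

theorem bddBelow_range_dist (x : M) (α : ι → M) : BddBelow (Set.range fun k => dist x (α k)) :=
  ⟨0, Set.forall_mem_range.2 fun _ => dist_nonneg⟩

theorem iInf_dist_update_le [DecidableEq ι] (α : ι → M) (i : ι) {a x : M}
    (h : dist x a ≤ dist x (α i)) :
    ⨅ k, dist x (Function.update α i a k) ≤ ⨅ k, dist x (α k) := by
  refine ciInf_mono (bddBelow_range_dist x _) fun k => ?_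
  by_cases hk : k = i
  · rwa [hk, Function.update_self]
  · rw [Function.update_of_ne hk]

variable [MeasurableSpace M] [OpensMeasurableSpace M] [Countable ι]

theorem measurable_iInf_dist_rpow (α : ι → M) (p : ℝ) :
    Measurable fun x => (⨅ k, dist x (α k)) ^ p :=
  (Measurable.iInf fun _ => (continuous_id.dist continuous_const).measurable).pow_const p

theorem integrable_iInf_dist_rpow_of_ae_mem_ball {μ : Measure M} [IsFiniteMeasure μ] {a : M}
    {R p : ℝ} (hp : 0 ≤ p) (hμ : ∀ᵐ x ∂μ, x ∈ ball a R) (α : ι → M) (i : ι) :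
    Integrable (fun x => (⨅ k, dist x (α k)) ^ p) μ := by
  refine .of_bound (measurable_iInf_dist_rpow α p).aestronglyMeasurable
    ((R + dist a (α i)) ^ p) ?_
  filter_upwards [hμ] with x hx
  have hinf_nonneg : 0 ≤ ⨅ k, dist x (α k) := Real.iInf_nonneg fun _ => dist_nonneg
  rw [Real.norm_of_nonneg (Real.rpow_nonneg hinf_nonneg p)]
  refine Real.rpow_le_rpow hinf_nonneg ?_ hp
  calc ⨅ k, dist x (α k) ≤ dist x (α i) := ciInf_le (bddBelow_range_dist x α) i
    _ ≤ dist x a + dist a (α i) := dist_triangle _ _ _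
    _ ≤ R + dist a (α i) := by linarith [mem_ball.mp hx]

end iInfDist

theorem distortionFn_update_le {M : Type*} [MetricSpace M] [MeasurableSpace M]
    [OpensMeasurableSpace M] {μ : Measure M} [IsFiniteMeasure μ] {a : M} {R p : ℝ} (hp : 0 ≤ p)
    (hμ : ∀ᵐ x ∂μ, x ∈ ball a R) {n : ℕ} (α : Fin n → M) (i : Fin n)
    (hcloser : ∀ᵐ x ∂μ, dist x a ≤ dist x (α i)) :
    distortionFn μ p n (Function.update α i a) ≤ distortionFn μ p n α := by
  refine integral_mono_of_nonneg ?_ (integrable_iInf_dist_rpow_of_ae_mem_ball hp hμ α i) ?_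
  · exact .of_forall fun x => Real.rpow_nonneg (Real.iInf_nonneg fun _ => dist_nonneg) p
  · filter_upwards [hcloser] with x hx
    exact Real.rpow_le_rpow (Real.iInf_nonneg fun _ => dist_nonneg)
      (iInf_dist_update_le α i hx) hp

theorem stmt5_general {M : Type*} [MetricSpace M] [MeasurableSpace M] [BorelSpace M]
    (μ : Measure M) [IsProbabilityMeasure μ] (p : ℝ) (hp : 1 ≤ p) (n : ℕ)
    (a : M) (R : ℝ) (hμ : μ (Metric.ball a R)ᶜ = 0)
    (α : Fin n → M) (i : Fin n) (hi : 2 * R < dist a (α i)) :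
    distortionFn μ p n (Function.update α i a) ≤ distortionFn μ p n α := by
  have hball : ∀ᵐ x ∂μ, x ∈ ball a R := mem_ae_iff.mpr hμ
  refine distortionFn_update_le (zero_le_one.trans hp) hball α i ?_
  filter_upwards [hball] with x hx
  exact (dist_lt_dist_of_mem_ball_of_two_mul_lt hx hi).le

/-- If `μ` is a probability measure supported in the ball `B(a, R)` and the center `aᵢ`
satisfies `d(a, aᵢ) > 2R`, then replacing `aᵢ` by `a` does not increase the distortion:
`F_{n,p}(α') ≤ F_{n,p}(α)` where `α' = (a₁, …, a, …, aₙ)`. -/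
theorem stmt5 {M : Type*} [MetricSpace M] [MeasurableSpace M] [BorelSpace M]
    (μ : Measure M) [IsProbabilityMeasure μ] (p : ℝ) (hp : 1 ≤ p) (n : ℕ)
    (a : M) (R : ℝ) (hR : 0 < R) (hμ : μ (Metric.ball a R)ᶜ = 0)
    (α : Fin n → M) (i : Fin n) (hi : 2 * R < dist a (α i)) :
    distortionFn μ p n (Function.update α i a) ≤ distortionFn μ p n α :=
  stmt5_general μ p hp n a R hμ α i hi
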